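/- arXiv:1809.04046 — 6 statements merged into one kernel-verified Lean document; each statement's English description precedes it below -/
import Mathlib

section
/- Let $J$ be a prime ideal of the power series ring $\mathbb{C}[[u,t]]$ that is invariant under the derivation $t\partial_t - u\partial_u$ (equivalently, invariant under the $\mathbb{C}^*$-action $t\mapsto zt$, $u\mapsto z^{-1}u$). Then $J$ is one of the four ideals $(0)$, $(u)$, $(t)$, or $(u,t)$. -/
/-- The derivation `t∂t - u∂u` on `ℂ[[u,t]]`, where `u = X 0` and `t = X 1`:
it multiplies the monomial `u^a t^b` by `b - a`. -/
noncomputable def Dtu (f : MvPowerSeries (Fin 2) ℂ) : MvPowerSeries (Fin 2) ℂ :=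
  fun d => (((d 1 : ℤ) - (d 0 : ℤ) : ℤ) : ℂ) * MvPowerSeries.coeff d f

/-!
If `u ∈ J` but `t ∉ J`, then `J` is the preimage of its image in `ℂ⟦u,t⟧/(u) ≅ ℂ⟦t⟧`, a
discrete valuation ring whose nonzero ideals are the `(tⁿ)`; as `t ∉ J` that image is zero, so
`J = (u)`. If both variables lie in `J`, then `J` is the maximal ideal `(u,t)`.

If neither variable lies in `J`, it suffices to show `J ⊆ (t)`, since then `J ⊆ ⋂ₙ (tⁿ) = 0`.
If not, the image of `J` in `ℂ⟦u,t⟧/(t) ≅ ℂ⟦u⟧` is `(uᵏ)`; choose `j ∈ J` with `j ≡ uᵏ` mod `t`,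
so that `J ⊆ (j, t)`. As `D uᵏ = -k uᵏ`, we get `(D + k) j = t g` with `g ∈ J`, and `D + k`
kills no monomial `uᵃtᵇ` with `a < k`. By induction on `n` this gives `J ⊆ (uᵏ, tⁿ)` for all
`n`, hence `j = uᵏ w` where `w ∈ J` has constant term `1`, a contradiction.
-/

open Function

namespace MvPowerSeries

section Projection

variable {σ R : Type*} [CommSemiring R]

/-- Sets every variable other than `X i` to zero. -/
noncomputable def toPowerSeries (i : σ) : MvPowerSeries σ R →ₐ[R] PowerSeries R :=
  killCompl (Embedding.punit i)

@[simp]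
theorem toPowerSeries_toMvPowerSeries (i : σ) (p : PowerSeries R) :
    toPowerSeries i (p.toMvPowerSeries i) = p :=
  killCompl_rename_app p

theorem toPowerSeries_surjective (i : σ) : Surjective (toPowerSeries (R := R) i) :=
  fun p => ⟨p.toMvPowerSeries i, toPowerSeries_toMvPowerSeries i p⟩

@[simp]
theorem toPowerSeries_X (i : σ) : toPowerSeries (R := R) i (X i) = PowerSeries.X :=
  killCompl_X (e := Embedding.punit i) PUnit.unit

@[simp]
theorem coeff_toPowerSeries (i : σ) (f : MvPowerSeries σ R) (n : ℕ) :
    PowerSeries.coeff n (toPowerSeries i f) = coeff (Finsupp.single i n) f := by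
  rw [PowerSeries.coeff, toPowerSeries, coeff_killCompl, Finsupp.embDomain_single]
  rfl

@[simp]
theorem constantCoeff_toPowerSeries (i : σ) (f : MvPowerSeries σ R) :
    PowerSeries.constantCoeff (toPowerSeries i f) = constantCoeff f := by
  rw [← PowerSeries.coeff_zero_eq_constantCoeff_apply, coeff_toPowerSeries,
    Finsupp.single_zero, coeff_zero_eq_constantCoeff_apply]

theorem X_dvd_iff_toPowerSeries_eq_zero {i j : Fin 2} (hij : i ≠ j)
    {f : MvPowerSeries (Fin 2) R} :
    X j ∣ f ↔ toPowerSeries i f = 0 := by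
  have hsingle : ∀ m : Fin 2 →₀ ℕ, m j = 0 → m = Finsupp.single i (m i) := by
    intro m hm
    ext a
    fin_cases a <;> fin_cases i <;> fin_cases j <;> simp_all
  rw [X_dvd_iff, PowerSeries.ext_iff]
  simp only [coeff_toPowerSeries, map_zero]
  refine ⟨fun h n => h _ (by simp [Finsupp.single_eq_of_ne hij.symm]), fun h m hm => ?_⟩
  rw [hsingle m hm]
  exact h _

theorem ker_toPowerSeries {i j : Fin 2} (hij : i ≠ j) :
    RingHom.ker (toPowerSeries (R := R) i) = Ideal.span {X j} := by
  ext f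
  rw [RingHom.mem_ker, Ideal.mem_span_singleton, X_dvd_iff_toPowerSeries_eq_zero hij]

end Projection

section Field

variable {k : Type*} [Field k]

theorem isMaximal_span_X_pair :
    (Ideal.span {X 0, X 1} : Ideal (MvPowerSeries (Fin 2) k)).IsMaximal := by
  have hspan : (Ideal.span {PowerSeries.X} : Ideal (PowerSeries k)) =
      (Ideal.span {X 1}).map (toPowerSeries (1 : Fin 2)) := by
    rw [Ideal.map_span, Set.image_singleton, toPowerSeries_X]
  have hcomap : (Ideal.span {X 0, X 1} : Ideal (MvPowerSeries (Fin 2) k)) =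
      (Ideal.span {PowerSeries.X}).comap (toPowerSeries 1) := by
    rw [hspan, Ideal.comap_map_of_surjective' _ (toPowerSeries_surjective 1),
      ker_toPowerSeries one_ne_zero, Ideal.span_insert, sup_comm]
  have : (Ideal.span {PowerSeries.X} : Ideal (PowerSeries k)).IsMaximal :=
    PowerSeries.maximalIdeal_eq_span_X (k := k) ▸ IsLocalRing.maximalIdeal.isMaximal _
  rw [hcomap]
  exact Ideal.comap_isMaximal_of_surjective _ (toPowerSeries_surjective 1)

theorem _root_.Ideal.IsPrime.eq_span_X_of_X_mem_of_X_notMem {J : Ideal (MvPowerSeries (Fin 2) k)}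
    (hJ : J.IsPrime) {i j : Fin 2} (hij : i ≠ j) (hi : X i ∈ J) (hj : X j ∉ J) :
    J = Ideal.span {X i} := by
  have hker := ker_toPowerSeries (R := k) hij.symm
  have hJ' : (J.map (toPowerSeries j)).comap (toPowerSeries j) = J := by
    rw [Ideal.comap_map_of_surjective' _ (toPowerSeries_surjective j), hker, sup_eq_left,
      Ideal.span_le, Set.singleton_subset_iff]
    exact hi
  have hbot : J.map (toPowerSeries j) = ⊥ := by
    by_contra hne
    obtain ⟨n, hn⟩ := IsDiscreteValuationRing.ideal_eq_span_pow_irreducible hne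
      PowerSeries.X_irreducible
    refine hj (hJ.mem_of_pow_mem n ?_)
    rw [← hJ', Ideal.mem_comap, map_pow, toPowerSeries_X, hn]
    exact Ideal.mem_span_singleton_self _
  rw [← hJ', hbot, ← RingHom.ker_eq_comap_bot, hker]

end Field

theorem _root_.Ideal.IsPrime.eq_bot_of_le_span_X {σ R : Type*} [CommSemiring R]
    {J : Ideal (MvPowerSeries σ R)} (hJ : J.IsPrime) {s : σ} (hle : J ≤ Ideal.span {X s})
    (hs : X s ∉ J) : J = ⊥ := by
  have hpow : ∀ n, ∀ f ∈ J, X s ^ n ∣ f := by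
    intro n
    induction n with
    | zero => simp
    | succ n ih =>
      intro f hf
      obtain ⟨g, rfl⟩ := Ideal.mem_span_singleton.1 (hle hf)
      rw [pow_succ']
      exact mul_dvd_mul_left _ (ih g ((hJ.mem_or_mem hf).resolve_left hs))
  rw [eq_bot_iff]
  intro f hf
  ext m
  exact X_pow_dvd_iff.1 (hpow (m s + 1) f hf) m (Nat.lt_succ_self _)

section Box

variable (R : Type*) [CommSemiring R]

/-- The monomial ideal `(X 0 ^ k, X 1 ^ n)`, described by its vanishing coefficients. -/
def boxIdeal (k n : ℕ) : Ideal (MvPowerSeries (Fin 2) R) where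
  carrier := {f | ∀ d : Fin 2 →₀ ℕ, d 0 < k → d 1 < n → coeff d f = 0}
  add_mem' hf hg d h0 h1 := by simp [hf d h0 h1, hg d h0 h1]
  zero_mem' d _ _ := by simp
  smul_mem' a f hf d h0 h1 := by
    rw [smul_eq_mul, coeff_mul]
    refine Finset.sum_eq_zero fun p hp => ?_
    have hle := Finset.HasAntidiagonal.antidiagonal.snd_le hp
    rw [hf p.2 ((hle 0).trans_lt h0) ((hle 1).trans_lt h1), mul_zero]

variable {R}

theorem X_one_mul_mem_boxIdeal {k n : ℕ} {g : MvPowerSeries (Fin 2) R}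
    (hg : g ∈ boxIdeal R k n) : X 1 * g ∈ boxIdeal R k (n + 1) := by
  intro d h0 h1
  rw [X_def, coeff_monomial_mul]
  split_ifs with hd
  · have hd1 : 1 ≤ d 1 := by simpa using hd 1
    rw [one_mul]
    refine hg _ (by simpa using h0) ?_
    simp only [Finsupp.tsub_apply, Finsupp.single_eq_same]
    omega
  · rfl

theorem X_zero_pow_dvd_of_forall_mem_boxIdeal {k : ℕ} {f : MvPowerSeries (Fin 2) R}
    (h : ∀ n, f ∈ boxIdeal R k n) : X 0 ^ k ∣ f :=
  X_pow_dvd_iff.2 fun m hm => h (m 1 + 1) m hm (Nat.lt_succ_self _)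

end Box

end MvPowerSeries

open MvPowerSeries

theorem coeff_Dtu_add_C_mul (f : MvPowerSeries (Fin 2) ℂ) (c : ℂ) (d : Fin 2 →₀ ℕ) :
    coeff d (Dtu f + C c * f) = ((d 1 : ℂ) - d 0 + c) * coeff d f := by
  rw [map_add, coeff_C_mul]
  change (((d 1 : ℤ) - d 0 : ℤ) : ℂ) * coeff d f + _ = _
  push_cast
  ring

theorem mem_boxIdeal_of_Dtu_add_C_mul_mem {f : MvPowerSeries (Fin 2) ℂ} {k n : ℕ}
    (h : Dtu f + C (k : ℂ) * f ∈ boxIdeal ℂ k n) : f ∈ boxIdeal ℂ k n := by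
  intro d h0 h1
  have hne : (d 1 : ℂ) - d 0 + k ≠ 0 := by
    exact_mod_cast (by omega : (d 1 : ℤ) - d 0 + k ≠ 0)
  have hd := h d h0 h1
  rw [coeff_Dtu_add_C_mul] at hd
  exact (mul_eq_zero.1 hd).resolve_left hne

theorem X_one_dvd_Dtu_add_C_mul {f : MvPowerSeries (Fin 2) ℂ} {k : ℕ}
    (h : X 1 ∣ f - X 0 ^ k) : X 1 ∣ Dtu f + C (k : ℂ) * f := by
  classical
  rw [X_dvd_iff] at h ⊢
  intro m hm
  have hf := h m hm
  rw [map_sub, sub_eq_zero, coeff_X_pow] at hf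
  rw [coeff_Dtu_add_C_mul, hf]
  split_ifs with hmk
  · subst hmk
    simp
  · rw [mul_zero]

theorem le_boxIdeal_of_Dtu_mem {J : Ideal (MvPowerSeries (Fin 2) ℂ)} (hJ : J.IsPrime)
    (hinv : ∀ f ∈ J, Dtu f ∈ J) (ht : X 1 ∉ J) {k : ℕ} {j : MvPowerSeries (Fin 2) ℂ}
    (hjJ : j ∈ J) (hj : X 1 ∣ j - X 0 ^ k) (hgen : J ≤ Ideal.span {j, X 1}) (n : ℕ) :
    J ≤ boxIdeal ℂ k n := by
  induction n with
  | zero => intro f _ d _ hd; omega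
  | succ n ih =>
    have hjbox : j ∈ boxIdeal ℂ k (n + 1) := by
      obtain ⟨g, hg⟩ := X_one_dvd_Dtu_add_C_mul hj
      have hgJ : g ∈ J := by
        refine (hJ.mem_or_mem ?_).resolve_left ht
        rw [← hg]
        exact J.add_mem (hinv j hjJ) (J.mul_mem_left _ hjJ)
      apply mem_boxIdeal_of_Dtu_add_C_mul_mem
      rw [hg]
      exact X_one_mul_mem_boxIdeal (ih hgJ)
    intro f hf
    obtain ⟨a, b, rfl⟩ := Ideal.mem_span_pair.1 (hgen hf)
    have hbJ : b ∈ J := by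
      refine (hJ.mem_or_mem ?_).resolve_left ht
      rw [mul_comm, ← add_sub_cancel_left (a * j) (b * X 1)]
      exact J.sub_mem hf (J.mul_mem_left a hjJ)
    rw [mul_comm b]
    exact Ideal.add_mem _ (Ideal.mul_mem_left _ a hjbox) (X_one_mul_mem_boxIdeal (ih hbJ))

theorem le_span_X_one_of_Dtu_mem {J : Ideal (MvPowerSeries (Fin 2) ℂ)} (hJ : J.IsPrime)
    (hinv : ∀ f ∈ J, Dtu f ∈ J) (hu : X 0 ∉ J) (ht : X 1 ∉ J) : J ≤ Ideal.span {X 1} := by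
  set π := toPowerSeries (R := ℂ) (0 : Fin 2)
  by_contra hle
  have hne : J.map π ≠ ⊥ := by
    rwa [Ne, Ideal.map_eq_bot_iff_le_ker, ker_toPowerSeries zero_ne_one]
  obtain ⟨k, hk⟩ := IsDiscreteValuationRing.ideal_eq_span_pow_irreducible hne
    PowerSeries.X_irreducible
  obtain ⟨j, hjJ, hjk⟩ : ∃ j ∈ J, π j = PowerSeries.X ^ k :=
    (Ideal.mem_map_iff_of_surjective π (toPowerSeries_surjective 0)).1
      (hk ▸ Ideal.mem_span_singleton_self _)
  have hj : X 1 ∣ j - X 0 ^ k := by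
    rw [X_dvd_iff_toPowerSeries_eq_zero zero_ne_one, map_sub, map_pow, toPowerSeries_X, hjk,
      sub_self]
  have hgen : J ≤ Ideal.span {j, X 1} := by
    intro f hf
    obtain ⟨h, hh⟩ := Ideal.mem_span_singleton'.1 (hk ▸ Ideal.mem_map_of_mem π hf)
    obtain ⟨h, rfl⟩ := toPowerSeries_surjective (0 : Fin 2) h
    obtain ⟨g, hg⟩ := (X_dvd_iff_toPowerSeries_eq_zero zero_ne_one).2
      (show π (f - h * j) = 0 by rw [map_sub, map_mul, hjk, hh, sub_self])
    exact Ideal.mem_span_pair.2 ⟨h, g, by rw [mul_comm g, ← hg]; ring⟩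
  obtain ⟨w, rfl⟩ := X_zero_pow_dvd_of_forall_mem_boxIdeal fun n =>
    le_boxIdeal_of_Dtu_mem hJ hinv ht hjJ hj hgen n hjJ
  have hwJ : w ∈ J := (hJ.mem_or_mem hjJ).resolve_left fun h => hu (hJ.mem_of_pow_mem k h)
  have hπw : π w = 1 := by
    rw [map_mul, map_pow, toPowerSeries_X] at hjk
    exact (mul_eq_left₀ (pow_ne_zero k PowerSeries.X_ne_zero)).1 hjk
  refine hJ.ne_top (Ideal.eq_top_of_isUnit_mem _ hwJ ?_)
  rw [isUnit_iff_constantCoeff, ← constantCoeff_toPowerSeries 0, hπw, map_one]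
  exact isUnit_one

/-- A prime ideal of `ℂ[[u,t]]` invariant under `t∂t - u∂u` is one of
`(0)`, `(u)`, `(t)`, `(u,t)`. -/
theorem stmt0 (J : Ideal (MvPowerSeries (Fin 2) ℂ)) (hJ : J.IsPrime)
    (hinv : ∀ f ∈ J, Dtu f ∈ J) :
    J = ⊥ ∨ J = Ideal.span {MvPowerSeries.X 0} ∨ J = Ideal.span {MvPowerSeries.X 1} ∨
      J = Ideal.span {MvPowerSeries.X 0, MvPowerSeries.X 1} := by
  by_cases hu : X 0 ∈ J <;> by_cases ht : X 1 ∈ J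
  · refine Or.inr (Or.inr (Or.inr (isMaximal_span_X_pair.eq_of_le hJ.ne_top ?_).symm))
    simp [Ideal.span_le, Set.insert_subset_iff, hu, ht]
  · exact Or.inr (Or.inl (hJ.eq_span_X_of_X_mem_of_X_notMem zero_ne_one hu ht))
  · exact Or.inr (Or.inr (Or.inl (hJ.eq_span_X_of_X_mem_of_X_notMem one_ne_zero ht hu)))
  · exact Or.inl (hJ.eq_bot_of_le_span_X (le_span_X_one_of_Dtu_mem hJ hinv hu ht) ht)
end

section
/- Let $J$ be any ideal of $\mathbb{C}[[u,t]]$ invariant under the derivation $t\partial_t - u\partial_u$. Then every associated (minimal) prime of $J$ is among $(0)$, $(u)$, $(t)$, $(u,t)$; consequently the radical $\sqrt{J}$ is an intersection of some of these four ideals. -/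
theorem Ideal.mem_of_forall_mem_sup_pow {R : Type*} [CommRing R] [IsNoetherianRing R]
    {I J : Ideal R} (hI : I ≤ Ideal.jacobson ⊥) {x : R} (hx : ∀ n : ℕ, x ∈ J ⊔ I ^ n) :
    x ∈ J := by
  have hkrull := Ideal.iInf_pow_smul_eq_bot_of_le_jacobson (M := R ⧸ J) I hI
  rw [← Ideal.Quotient.eq_zero_iff_mem, ← Submodule.mem_bot R, ← hkrull, Submodule.mem_iInf]
  intro n
  obtain ⟨j, hj, y, hy, rfl⟩ := Submodule.mem_sup.1 (hx n)
  have : Ideal.Quotient.mk J (j + y) = y • (1 : R ⧸ J) := by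
    rw [map_add, Ideal.Quotient.eq_zero_iff_mem.2 hj, zero_add, Algebra.smul_def, mul_one]
    rfl
  rw [this]
  exact Submodule.smul_mem_smul hy Submodule.mem_top

theorem Finsupp.eq_single_of_apply_eq_zero {i j : Fin 2} (hij : i ≠ j) {e : Fin 2 →₀ ℕ}
    (he : e i = 0) : e = single j (e j) := by
  ext l
  fin_cases i <;> fin_cases j <;> fin_cases l <;> simp_all

namespace MvPowerSeries

open IsLocalRing

theorem exists_X_mem_of_monomial_mem {σ R : Type*} [CommSemiring R]
    {P : Ideal (MvPowerSeries σ R)} (hP : P.IsPrime) {d : σ →₀ ℕ} (hd : monomial d 1 ∈ P) :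
    ∃ i, X i ∈ P := by
  induction d using Finsupp.induction with
  | zero => exact absurd (Ideal.eq_top_of_isUnit_mem _ hd (by simp)) hP.ne_top
  | single_add i n d _ _ ih =>
    rw [← one_mul (1 : R), ← monomial_mul_monomial, ← X_pow_eq] at hd
    rcases hP.mem_or_mem hd with h | h
    · exact ⟨i, hP.mem_of_pow_mem n h⟩
    · exact ih h

theorem monomial_one_mem_of_forall_le {σ k : Type*} [Field k] {I : Ideal (MvPowerSeries σ k)}
    {φ : MvPowerSeries σ k} {d : σ →₀ ℕ} (hφ : φ ∈ I) (hd : coeff d φ ≠ 0)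
    (hle : ∀ e, coeff e φ ≠ 0 → d ≤ e) : monomial d 1 ∈ I := by
  set ψ : MvPowerSeries σ k := fun e => coeff (e + d) φ
  have hφψ : φ = monomial d 1 * ψ := by
    ext e
    rw [coeff_monomial_mul]
    split_ifs with h
    · rw [one_mul]
      exact congrArg (coeff · φ) (tsub_add_cancel_of_le h).symm
    · by_contra hne
      exact h (hle e hne)
  have hψ : IsUnit ψ := by
    rw [isUnit_iff_constantCoeff, ← coeff_zero_eq_constantCoeff_apply]
    refine isUnit_iff_ne_zero.2 ?_
    change coeff (0 + d) φ ≠ 0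
    rwa [zero_add]
  rw [hφψ] at hφ
  exact (I.mul_unit_mem_iff_mem hψ).1 hφ

section TwoVariables

theorem mem_span_X_pair_pow {R : Type*} [CommRing R] {n : ℕ} {f : MvPowerSeries (Fin 2) R}
    (hf : ∀ e : Fin 2 →₀ ℕ, e 0 < n → e 1 < n → coeff e f = 0) :
    f ∈ Ideal.span {X 0, X 1} ^ n := by
  set g : MvPowerSeries (Fin 2) R := fun e => if n ≤ e 0 then coeff e f else 0
  have hg : (X 0) ^ n ∣ g := X_pow_dvd_iff.2 fun e he => if_neg (by omega)
  have hfg : (X 1) ^ n ∣ f - g := by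
    refine X_pow_dvd_iff.2 fun e he => ?_
    change coeff e f - (if n ≤ e 0 then coeff e f else 0) = 0
    split_ifs with h
    · exact sub_self _
    · rw [hf e (by omega) he, sub_zero]
  rw [← add_sub_cancel g f]
  exact add_mem (Ideal.mem_of_dvd _ hg (Ideal.pow_mem_pow (Ideal.subset_span (by simp)) n))
    (Ideal.mem_of_dvd _ hfg (Ideal.pow_mem_pow (Ideal.subset_span (by simp)) n))

variable {k : Type*} [Field k]

theorem maximalIdeal_eq_span_X_pair :
    maximalIdeal (MvPowerSeries (Fin 2) k) = Ideal.span {X 0, X 1} := by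
  apply le_antisymm
  · intro f hf
    rw [mem_maximalIdeal, mem_nonunits_iff, isUnit_iff_constantCoeff, isUnit_iff_ne_zero,
      not_not] at hf
    simpa using mem_span_X_pair_pow (n := 1) (f := f) fun e he0 he1 => by
      rwa [show e = 0 by ext i; fin_cases i <;> simp <;> omega, coeff_zero_eq_constantCoeff]
  · rw [Ideal.span_le]
    rintro _ (rfl | rfl) <;>
      simp [mem_maximalIdeal, mem_nonunits_iff, isUnit_iff_constantCoeff]

theorem eq_span_X_or_X_mem_of_isPrime {P : Ideal (MvPowerSeries (Fin 2) k)} (hP : P.IsPrime)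
    {i j : Fin 2} (hij : i ≠ j) (hXi : X i ∈ P) : P = Ideal.span {X i} ∨ X j ∈ P := by
  classical
  by_cases hle : P ≤ Ideal.span {X i}
  · exact Or.inl (le_antisymm hle (Ideal.span_le.2 (Set.singleton_subset_iff.2 hXi)))
  right
  obtain ⟨f, hfP, hf⟩ := SetLike.not_le_iff_exists.1 hle
  -- `h` is `f` with `X i` set to zero: a nonzero power series in `X j` alone, lying in `P`.
  set h : MvPowerSeries (Fin 2) k := fun e => if e i = 0 then coeff e f else 0
  have hdvd : X i ∣ f - h := X_dvd_iff.2 fun e he => by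
    change coeff e f - (if e i = 0 then coeff e f else 0) = 0
    rw [if_pos he, sub_self]
  have hhP : h ∈ P := by
    rw [← sub_sub_cancel f h]
    exact P.sub_mem hfP (Ideal.mem_of_dvd _ hdvd hXi)
  have hsupp : ∀ e, coeff e h ≠ 0 → e = Finsupp.single j (e j) := fun e he =>
    Finsupp.eq_single_of_apply_eq_zero hij (by by_contra hei; exact he (if_neg hei))
  have hex : ∃ n, coeff (Finsupp.single j n) h ≠ 0 := by
    obtain ⟨e, he⟩ := (ne_zero_iff_exists_coeff_ne_zero h).1 fun h0 => hf <|
      Ideal.mem_span_singleton.2 (by simpa [h0] using hdvd)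
    exact ⟨e j, hsupp e he ▸ he⟩
  have hmon : monomial (Finsupp.single j (Nat.find hex)) 1 ∈ P :=
    monomial_one_mem_of_forall_le hhP (Nat.find_spec hex) fun e he =>
      Finsupp.single_le_iff.2 (Nat.find_min' hex (hsupp e he ▸ he))
  rw [← X_pow_eq] at hmon
  exact hP.mem_of_pow_mem _ hmon

theorem eq_span_X_or_eq_maximalIdeal_of_isPrime {P : Ideal (MvPowerSeries (Fin 2) k)}
    (hP : P.IsPrime) {i j : Fin 2} (hij : i ≠ j) (hXi : X i ∈ P) :
    P = Ideal.span {X i} ∨ P = maximalIdeal _ := by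
  refine (eq_span_X_or_X_mem_of_isPrime hP hij hXi).imp_right fun hXj => ?_
  refine le_antisymm (le_maximalIdeal hP.ne_top) ?_
  rw [maximalIdeal_eq_span_X_pair, Ideal.span_le]
  fin_cases i <;> fin_cases j <;> simp_all [Set.insert_subset_iff]

end TwoVariables

end MvPowerSeries

open MvPowerSeries

def weightMul (φ : ℤ → ℂ) (f : MvPowerSeries (Fin 2) ℂ) : MvPowerSeries (Fin 2) ℂ :=
  fun e => φ ((e 1 : ℤ) - e 0) * coeff e f

theorem coeff_weightMul (φ : ℤ → ℂ) (f : MvPowerSeries (Fin 2) ℂ) (e : Fin 2 →₀ ℕ) :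
    coeff e (weightMul φ f) = φ ((e 1 : ℤ) - e 0) * coeff e f :=
  rfl

theorem Dtu_eq_weightMul (f : MvPowerSeries (Fin 2) ℂ) :
    Dtu f = weightMul (fun v => (v : ℂ)) f :=
  rfl

def weightComponent (w : ℤ) : MvPowerSeries (Fin 2) ℂ → MvPowerSeries (Fin 2) ℂ :=
  weightMul fun v => if v = w then 1 else 0

section Invariant

variable {J : Ideal (MvPowerSeries (Fin 2) ℂ)} (hinv : ∀ f ∈ J, Dtu f ∈ J)
include hinv

theorem weightMul_eval_mem (p : Polynomial ℂ) {f : MvPowerSeries (Fin 2) ℂ} (hf : f ∈ J) :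
    weightMul (fun v => p.eval (v : ℂ)) f ∈ J := by
  induction p using Polynomial.induction_on with
  | C a =>
    convert J.mul_mem_left (C a) hf using 1
    ext e
    rw [coeff_weightMul, coeff_C_mul, Polynomial.eval_C]
  | add p q hp hq =>
    convert J.add_mem hp hq using 1
    ext e
    simp only [coeff_weightMul, map_add, Polynomial.eval_add, add_mul]
  | monomial n a ih =>
    convert hinv _ ih using 1
    ext e
    simp only [Dtu_eq_weightMul, coeff_weightMul, Polynomial.eval_mul, Polynomial.eval_pow,
      Polynomial.eval_C, Polynomial.eval_X, pow_succ]
    ring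

theorem weightComponent_mem (w : ℤ) {f : MvPowerSeries (Fin 2) ℂ} (hf : f ∈ J) :
    weightComponent w f ∈ J := by
  refine Ideal.mem_of_forall_mem_sup_pow (I := Ideal.span {X 0, X 1}) ?_ fun n => ?_
  · rw [← maximalIdeal_eq_span_X_pair]
    exact IsLocalRing.maximalIdeal_le_jacobson _
  -- the Lagrange polynomial `p` separates `w` from the other weights of monomials in a box
  set s := insert w (Finset.Icc (-n : ℤ) n)
  set p := Lagrange.basis s (fun v : ℤ => (v : ℂ)) w
  rw [← add_sub_cancel (weightMul (fun v => p.eval (v : ℂ)) f) (weightComponent w f)]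
  refine Submodule.add_mem_sup (weightMul_eval_mem hinv p hf)
    (mem_span_X_pair_pow fun e he0 he1 => ?_)
  have hinj : Set.InjOn (fun v : ℤ => (v : ℂ)) s := Int.cast_injective.injOn
  have hes : (e 1 : ℤ) - e 0 ∈ s :=
    Finset.mem_insert_of_mem (Finset.mem_Icc.2 ⟨by omega, by omega⟩)
  rw [map_sub, weightComponent, coeff_weightMul, coeff_weightMul]
  split_ifs with hw
  · rw [hw, Lagrange.eval_basis_self hinj (Finset.mem_insert_self w _), sub_self]
  · rw [Lagrange.eval_basis_of_ne (Ne.symm hw) hes, zero_mul, sub_zero]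

theorem exists_monomial_mem_of_ne_zero {f : MvPowerSeries (Fin 2) ℂ} (hf : f ∈ J)
    (hf0 : f ≠ 0) : ∃ d, monomial d 1 ∈ J := by
  obtain ⟨e₀, he₀⟩ := (ne_zero_iff_exists_coeff_ne_zero f).1 hf0
  obtain ⟨w, hw₀⟩ : ∃ w : ℤ, (e₀ 1 : ℤ) - e₀ 0 = w := ⟨_, rfl⟩
  have hweight : ∀ e, coeff e (weightComponent w f) ≠ 0 → (e 1 : ℤ) - e 0 = w := fun e he => by
    by_contra hw
    exact he (by rw [weightComponent, coeff_weightMul, if_neg hw, zero_mul])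
  have hg₀ : coeff e₀ (weightComponent w f) ≠ 0 := by
    rwa [weightComponent, coeff_weightMul, if_pos hw₀, one_mul]
  -- within a single weight, the exponent of least total degree divides all the others
  obtain ⟨d, hd, hmin⟩ := (measure fun e : Fin 2 →₀ ℕ => e 0 + e 1).wf.has_min
    {e | coeff e (weightComponent w f) ≠ 0} ⟨e₀, hg₀⟩
  refine ⟨d, monomial_one_mem_of_forall_le (weightComponent_mem hinv w hf) hd fun e he => ?_⟩
  have hde : d 0 + d 1 ≤ e 0 + e 1 := not_lt.1 (hmin e he)
  have hwd := hweight d hd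
  have hwe := hweight e he
  intro i
  fin_cases i <;> simp <;> omega

end Invariant

/-- For an ideal `J` of `ℂ[[u,t]]` invariant under `t∂t - u∂u`, every minimal prime of `J`
is among `(0)`, `(u)`, `(t)`, `(u,t)`; consequently `√J` is an intersection of some of
these four ideals. -/
theorem stmt1 (J : Ideal (MvPowerSeries (Fin 2) ℂ)) (hinv : ∀ f ∈ J, Dtu f ∈ J) :
    (∀ P ∈ J.minimalPrimes,
        P = ⊥ ∨ P = Ideal.span {MvPowerSeries.X 0} ∨ P = Ideal.span {MvPowerSeries.X 1} ∨
          P = Ideal.span {MvPowerSeries.X 0, MvPowerSeries.X 1}) ∧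
    ∃ S : Set (Ideal (MvPowerSeries (Fin 2) ℂ)),
      S ⊆ {⊥, Ideal.span {MvPowerSeries.X 0}, Ideal.span {MvPowerSeries.X 1},
            Ideal.span {MvPowerSeries.X 0, MvPowerSeries.X 1}} ∧
      J.radical = sInf S := by
  have hminimal : ∀ P ∈ J.minimalPrimes,
      P = ⊥ ∨ P = Ideal.span {X 0} ∨ P = Ideal.span {X 1} ∨ P = Ideal.span {X 0, X 1} := by
    intro P hP
    rcases eq_or_ne J ⊥ with rfl | hJ
    · have : IsDomain (MvPowerSeries (Fin 2) ℂ) := NoZeroDivisors.to_isDomain _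
      exact Or.inl (le_antisymm (hP.2 ⟨Ideal.isPrime_bot, le_rfl⟩ bot_le) bot_le)
    obtain ⟨f, hfJ, hf0⟩ := Submodule.exists_mem_ne_zero_of_ne_bot hJ
    obtain ⟨d, hd⟩ := exists_monomial_mem_of_ne_zero hinv hfJ hf0
    obtain ⟨i, hi⟩ := exists_X_mem_of_monomial_mem hP.1.1 (hP.1.2 hd)
    rw [← maximalIdeal_eq_span_X_pair]
    fin_cases i
    · rcases eq_span_X_or_eq_maximalIdeal_of_isPrime hP.1.1 (j := 1) (by decide) hi with h | h <;>
        simp [h]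
    · rcases eq_span_X_or_eq_maximalIdeal_of_isPrime hP.1.1 (j := 0) (by decide) hi with h | h <;>
        simp [h]
  refine ⟨hminimal, J.minimalPrimes, fun P hP => ?_, Ideal.sInf_minimalPrimes.symm⟩
  rcases hminimal P hP with h | h | h | h <;> simp [h]
end

section
/- Let $I$ be an ideal of $B = \mathbb{C}[z,z^{-1}][[q]]$ such that $I \subseteq ((z-1)^2)$ and such that the comultiplication $\Delta: B \to B \,\hat\otimes\, B \cong \mathbb{C}[z_1^{\pm},z_2^{\pm}][[q]]$, $z \mapsto z_1 z_2$, satisfies $\Delta(I) \subseteq I\otimes B + B\otimes I$. Then $I \subseteq ((z-1)^n)$ for all $n \geq 1$, and hence $I = 0$. -/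
noncomputable section

/-- The Hopf algebra `B = ℂ[z,z⁻¹][[q]]`. -/
abbrev BH : Type := PowerSeries (LaurentPolynomial ℂ)

/-- The ring `ℂ[z₁^±, z₂^±][[q]]`, the (completed) tensor square of `B`. -/
abbrev BH2 : Type := PowerSeries (AddMonoidAlgebra ℂ (ℤ × ℤ))

/-- The element `z` of `B`. -/
def zB : BH := PowerSeries.C (LaurentPolynomial.T 1)

/-- The comultiplication `Δ : B → B ⊗ B`, `z ↦ z₁ z₂`, induced by the diagonal
`ℤ →+ ℤ × ℤ`. -/
def Δh : BH →+* BH2 :=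
  PowerSeries.map
    (AddMonoidAlgebra.mapDomainRingHom ℂ
      ({ toFun := fun n : ℤ => (n, n), map_zero' := rfl,
         map_add' := fun _ _ => rfl } : ℤ →+ ℤ × ℤ))

/-- The first inclusion `B → B ⊗ B`, `z ↦ z₁`. -/
def ι1 : BH →+* BH2 := PowerSeries.map (AddMonoidAlgebra.mapDomainRingHom ℂ (AddMonoidHom.inl ℤ ℤ))

/-- The second inclusion `B → B ⊗ B`, `z ↦ z₂`. -/
def ι2 : BH →+* BH2 := PowerSeries.map (AddMonoidAlgebra.mapDomainRingHom ℂ (AddMonoidHom.inr ℤ ℤ))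

/-!
Send `z₁ ↦ 1 + ε` and `z₂ ↦ z`, with `ε² = 0`. This kills `ι₁` of `((z - 1)²)`, maps `ι₂ f` to `f`,
and maps `Δ f = f(z₁ z₂)` to `f(z + ε z) = f + ε · z f'`, so the hypotheses make `I` stable under
`z d/dz`. If `I ⊆ ((z - 1)^(m+1))` and `f = (z - 1)^(m+1) g ∈ I`, then
`z f' ≡ (m + 1) z (z - 1)^m g` modulo `(z - 1)^(m+1)`, and since `(m + 1) z` is a unit, `z - 1 ∣ g`.
Finally `B` is a noetherian domain in which `z - 1` is not a unit, so no nonzero element of `B` is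
divisible by every power of `z - 1`.
-/

open LaurentPolynomial TrivSqZeroExt DualNumber PowerSeries

instance {R : Type*} [CommRing R] [IsNoetherianRing R] : IsNoetherianRing R[T;T⁻¹] :=
  IsLocalization.isNoetherianRing (Submonoid.powers (Polynomial.X : Polynomial R)) _ inferInstance

section DualNumber

variable {A : Type*} [CommRing A]

def Ideal.dualNumber (I : Ideal A) : Ideal A[ε] where
  carrier := {w | w.fst ∈ I ∧ w.snd ∈ I}
  zero_mem' := ⟨I.zero_mem, I.zero_mem⟩
  add_mem' hv hw := ⟨I.add_mem hv.1 hw.1, I.add_mem hv.2 hw.2⟩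
  smul_mem' c w hw := by
    refine ⟨I.mul_mem_left _ hw.1, ?_⟩
    simpa using I.add_mem (I.mul_mem_left c.fst hw.2) (I.mul_mem_left c.snd hw.1)

theorem snd_map_pow_succ_mul (ψ : A →+* A[ε]) (hψ : ∀ a, (ψ a).fst = a) (x g : A) (m : ℕ) :
    (ψ (x ^ (m + 1) * g)).snd = x ^ (m + 1) * (ψ g).snd + ((m + 1) * (ψ x).snd) * (x ^ m * g) := by
  simp [snd_pow, hψ]
  ring

theorem Ideal.le_span_pow_add_two [IsDomain A] [Algebra ℚ A] (ψ : A →+* A[ε])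
    (hψ : ∀ a, (ψ a).fst = a) {I : Ideal A} (hI : ∀ f ∈ I, (ψ f).snd ∈ I) {x : A}
    (hx : IsUnit (ψ x).snd) {m : ℕ} (hm : I ≤ Ideal.span {x ^ (m + 1)}) :
    I ≤ Ideal.span {x ^ (m + 2)} := by
  intro f hf
  obtain ⟨g, rfl⟩ := Ideal.mem_span_singleton.mp (hm hf)
  have hsnd := Ideal.mem_span_singleton.mp (hm (hI _ hf))
  rw [snd_map_pow_succ_mul ψ hψ, dvd_add_right (dvd_mul_right _ _)] at hsnd
  have hm1 : IsUnit ((m : A) + 1) := by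
    simpa using (Nat.cast_add_one_ne_zero (R := ℚ) m).isUnit.map (algebraMap ℚ A)
  have hx0 : x ≠ 0 := by
    rintro rfl
    simp at hx
  rw [(hm1.mul hx).dvd_mul_left, pow_succ, mul_dvd_mul_iff_left (pow_ne_zero m hx0)] at hsnd
  exact Ideal.mem_span_singleton.mpr (pow_succ x (m + 1) ▸ mul_dvd_mul_left _ hsnd)

theorem Ideal.le_span_pow_succ [IsDomain A] [Algebra ℚ A] (ψ : A →+* A[ε])
    (hψ : ∀ a, (ψ a).fst = a) {I : Ideal A} (hI : ∀ f ∈ I, (ψ f).snd ∈ I) {x : A}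
    (hx : IsUnit (ψ x).snd) (h1 : I ≤ Ideal.span {x}) (n : ℕ) :
    I ≤ Ideal.span {x ^ (n + 1)} := by
  induction n with
  | zero => simpa using h1
  | succ m ih => exact Ideal.le_span_pow_add_two ψ hψ hI hx ih

theorem Ideal.eq_bot_of_forall_le_span_pow [IsDomain A] [WfDvdMonoid A] {I : Ideal A} {x : A}
    (hx : ¬IsUnit x) (h : ∀ n, I ≤ Ideal.span {x ^ (n + 1)}) : I = ⊥ := by
  refine (Submodule.eq_bot_iff _).mpr fun f hf => by_contra fun hf0 => ?_
  obtain ⟨n, hn⟩ := FiniteMultiplicity.of_not_isUnit hx hf0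
  exact hn (Ideal.mem_span_singleton.mp (h n hf))

def PowerSeries.toDualNumber : A[ε]⟦X⟧ →+* A⟦X⟧[ε] where
  toFun x := inl (map (fstHom A A A).toRingHom x) + inr (mk fun n => (coeff n x).snd)
  map_one' := by
    ext n <;> by_cases hn : n = 0 <;> simp [coeff_one, hn]
  map_mul' x y := by
    ext n
    · simp
    · simp only [snd_add, snd_inl, snd_inr, zero_add, coeff_mk, coeff_mul]
      rw [TrivSqZeroExt.snd_sum]
      simp [coeff_mul, Finset.sum_add_distrib]
  map_zero' := by ext <;> simp
  map_add' x y := by ext <;> simp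

theorem PowerSeries.toDualNumber_C (w : A[ε]) :
    toDualNumber (C w) = inl (C w.fst) + inr (C w.snd) := by
  ext n <;> by_cases hn : n = 0 <;> simp [toDualNumber, coeff_C, hn]

end DualNumber

def evalDualMonoidHom : Multiplicative (ℤ × ℤ) →* (LaurentPolynomial ℂ)[ε] where
  toFun p := inl (T p.toAdd.2) + inr (p.toAdd.1 • T p.toAdd.2)
  map_one' := by apply TrivSqZeroExt.ext <;> simp
  map_mul' p q := by
    apply TrivSqZeroExt.ext
    · simp only [toAdd_mul, Prod.snd_add, TrivSqZeroExt.fst_mul, fst_add, fst_inl, fst_inr,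
        add_zero, T_add]
    · simp only [toAdd_mul, Prod.fst_add, Prod.snd_add, DualNumber.snd_mul, fst_add, fst_inl,
        fst_inr, snd_add, snd_inl, snd_inr, add_zero, zero_add, T_add, mul_smul_comm,
        smul_mul_assoc, add_smul]
      abel

def evalDualLaurent : AddMonoidAlgebra ℂ (ℤ × ℤ) →+* (LaurentPolynomial ℂ)[ε] :=
  (AddMonoidAlgebra.lift ℂ _ _ evalDualMonoidHom).toRingHom

theorem evalDualLaurent_single (p : ℤ × ℤ) (c : ℂ) :
    evalDualLaurent (AddMonoidAlgebra.single p c) =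
      inl (AddMonoidAlgebra.single p.2 c) + inr (p.1 • AddMonoidAlgebra.single p.2 c) := by
  rw [evalDualLaurent, AlgHom.toRingHom_eq_coe, RingHom.coe_coe, AddMonoidAlgebra.lift_single]
  simp only [evalDualMonoidHom, MonoidHom.coe_mk, OneHom.coe_mk, toAdd_ofAdd, smul_add, ← inl_smul,
    ← inr_smul, smul_comm c p.1]
  simp only [T, AddMonoidAlgebra.smul_single', mul_one]

theorem evalDualLaurent_comp_inr :
    evalDualLaurent.comp (AddMonoidAlgebra.mapDomainRingHom ℂ (AddMonoidHom.inr ℤ ℤ)) =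
      inlHom _ _ := by
  apply AddMonoidAlgebra.ringHom_ext <;> intro <;>
    simp only [RingHom.comp_apply, AddMonoidAlgebra.mapDomainRingHom_apply,
      AddMonoidAlgebra.mapDomain_single, evalDualLaurent_single] <;>
    simp

theorem fstHom_comp_evalDualLaurent_comp_diag :
    ((fstHom ℂ _ _).toRingHom.comp evalDualLaurent).comp
      (AddMonoidAlgebra.mapDomainRingHom ℂ
        ({ toFun := fun n : ℤ => (n, n), map_zero' := rfl,
           map_add' := fun _ _ => rfl } : ℤ →+ ℤ × ℤ)) = RingHom.id _ := by
  apply AddMonoidAlgebra.ringHom_ext <;> intro <;>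
    simp only [RingHom.comp_apply, AddMonoidAlgebra.mapDomainRingHom_apply,
      AddMonoidAlgebra.mapDomain_single, evalDualLaurent_single] <;>
    simp

def evalDual : BH2 →+* BH[ε] := toDualNumber.comp (map evalDualLaurent)

theorem evalDual_ι2 (f : BH) : evalDual (ι2 f) = inl f := by
  have h := DFunLike.congr_fun evalDualLaurent_comp_inr
  simp only [RingHom.comp_apply, AddMonoidAlgebra.mapDomainRingHom_apply, inlHom_apply] at h
  apply TrivSqZeroExt.ext <;> ext1 n <;> simp [evalDual, ι2, toDualNumber, h]

theorem fst_evalDual_Δh (f : BH) : (evalDual (Δh f)).fst = f := by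
  ext1 n
  simpa [evalDual, Δh, toDualNumber] using
    DFunLike.congr_fun fstHom_comp_evalDualLaurent_comp_diag (coeff n f)

theorem evalDual_ι1_zB : evalDual (ι1 zB) = 1 + ε := by
  rw [evalDual, ι1, zB, RingHom.comp_apply, map_C, map_C, toDualNumber_C, T,
    AddMonoidAlgebra.mapDomainRingHom_apply, AddMonoidAlgebra.mapDomain_single,
    evalDualLaurent_single]
  simp only [AddMonoidHom.inl_apply, one_smul, single_zero_one_eq_one]
  rw [fst_add, fst_inl, fst_inr, add_zero, snd_add, snd_inl, snd_inr, zero_add, map_one, inl_one]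
  rfl

theorem snd_evalDual_Δh_zB : (evalDual (Δh zB)).snd = zB := by
  rw [evalDual, Δh, zB, RingHom.comp_apply, map_C, map_C, toDualNumber_C, T,
    AddMonoidAlgebra.mapDomainRingHom_apply, AddMonoidAlgebra.mapDomain_single,
    evalDualLaurent_single]
  simp

theorem span_ι1_sup_span_ι2_le_comap_evalDual {I : Ideal BH}
    (hI2 : I ≤ Ideal.span {(zB - 1) ^ 2}) :
    Ideal.span (ι1 '' (I : Set BH)) ⊔ Ideal.span (ι2 '' (I : Set BH)) ≤
      I.dualNumber.comap evalDual := by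
  refine sup_le ?_ ?_ <;> rw [Ideal.span_le] <;> rintro _ ⟨y, hy, rfl⟩
  · obtain ⟨k, rfl⟩ := Ideal.mem_span_singleton.mp (hI2 hy)
    have hε : evalDual (ι1 ((zB - 1) ^ 2 * k)) = 0 := by
      rw [map_mul, map_mul, map_pow, map_pow, map_sub, map_sub, map_one, map_one, evalDual_ι1_zB,
        add_sub_cancel_left, eps_pow_two, zero_mul]
    exact (Ideal.mem_comap.mpr (hε ▸ Submodule.zero_mem _))
  · exact ⟨by simpa [evalDual_ι2] using hy, by simp [evalDual_ι2]⟩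

theorem isUnit_zB : IsUnit zB := (isUnit_T 1).map PowerSeries.C

theorem not_isUnit_zB_sub_one : ¬IsUnit (zB - 1) := fun h => by
  simpa [zB] using h.map ((LaurentPolynomial.eval₂ (RingHom.id ℂ) 1).comp constantCoeff)

/-- Let `I` be an ideal of `B = ℂ[z,z⁻¹][[q]]` with `I ⊆ ((z-1)²)` and
`Δ(I) ⊆ I ⊗ B + B ⊗ I`.  Then `I ⊆ ((z-1)ⁿ)` for all `n ≥ 1`, and hence `I = 0`. -/
theorem stmt9 (I : Ideal BH)
    (hI2 : I ≤ Ideal.span {(zB - 1) ^ 2})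
    (hΔ : ∀ f ∈ I, Δh f ∈ Ideal.span (ι1 '' (I : Set BH)) ⊔ Ideal.span (ι2 '' (I : Set BH))) :
    (∀ n : ℕ, 1 ≤ n → I ≤ Ideal.span {(zB - 1) ^ n}) ∧ I = ⊥ := by
  have hstable : ∀ f ∈ I, ((evalDual.comp Δh) f).snd ∈ I :=
    fun f hf => (span_ι1_sup_span_ι2_le_comap_evalDual hI2 (hΔ f hf)).2
  have hunit : IsUnit ((evalDual.comp Δh) (zB - 1)).snd := by
    simpa [snd_evalDual_Δh_zB] using isUnit_zB
  have h1 : I ≤ Ideal.span {zB - 1} :=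
    hI2.trans (Ideal.span_singleton_le_span_singleton.mpr (dvd_pow_self _ two_ne_zero))
  have hpow := Ideal.le_span_pow_succ _ fst_evalDual_Δh hstable hunit h1
  refine ⟨fun n hn => ?_, Ideal.eq_bot_of_forall_le_span_pow not_isUnit_zB_sub_one hpow⟩
  obtain ⟨k, rfl⟩ := Nat.exists_eq_add_of_le' hn
  exact hpow k

end
end

section
/- Let $C^\bullet$, $D^\bullet$ be bounded above cochain complexes of objects in an abelian category. If for each $i$ the total hom complex $\mathrm{hom}^\bullet(C^i, D^\bullet)$ is acyclic, then the total hom complex $\mathrm{hom}^\bullet(C^\bullet, D^\bullet)$ is acyclic. -/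
/-!
Since `C` is bounded above, a primitive `y` of a cocycle `x` can be built by descending
induction on the source degree `p`. If `y` is already a primitive of `x` in degrees `> p`,
the obstruction `x^p - (-1)^n d_C ≫ y^{p+1}` is a cycle of the complex `Hom(C^p, D•)`,
and acyclicity of `hom•(C^p, D•)` lifts it along `d_D`, which defines `y^p`.
-/

open CategoryTheory CategoryTheory.Limits CochainComplex.HomComplex

namespace CochainComplex.HomComplex

variable {A : Type*} [Category A]

def Acyclic [Preadditive A] (K L : CochainComplex A ℤ) : Prop :=
  ∀ n : ℤ, ∀ x : Cochain K L n, δ n (n + 1) x = 0 → ∃ y : Cochain K L (n - 1), δ (n - 1) n y = x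

lemma exists_comp_d_eq_of_acyclic_single [Preadditive A] [HasZeroObject A]
    {X : A} {D : CochainComplex A ℤ}
    (hX : Acyclic ((HomologicalComplex.single A (ComplexShape.up ℤ) 0).obj X) D)
    {m : ℤ} (f : X ⟶ D.X m) (hf : f ≫ D.d m (m + 1) = 0) :
    ∃ g : X ⟶ D.X (m - 1), g ≫ D.d (m - 1) m = f := by
  have hx : δ m (m + 1) (Cochain.fromSingleMk f (zero_add m)) = 0 := by
    rw [Cochain.δ_fromSingleMk _ _ _ _ (zero_add _), hf, Cochain.fromSingleMk_zero]
  obtain ⟨y, hy⟩ := hX m _ hx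
  obtain ⟨g, rfl⟩ := Cochain.fromSingleMk_surjective y (m - 1) (zero_add _)
  refine ⟨g, (Cochain.fromSingleEquiv (zero_add m)).symm.injective ?_⟩
  exact (Cochain.δ_fromSingleMk _ _ _ _ (zero_add m)).symm.trans hy

section Primitive

variable [Preadditive A] {C D : CochainComplex A ℤ} {n : ℤ}

lemma comp_d_eq_of_δ_eq_zero {x : Cochain C D n} (hx : δ n (n + 1) x = 0) (p : ℤ) :
    x.v p (p + n) rfl ≫ D.d (p + n) (p + n + 1) =
      n.negOnePow • C.d p (p + 1) ≫ x.v (p + 1) (p + n + 1) (by omega) := by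
  have h := Cochain.congr_v hx p (p + n + 1) (by omega)
  rw [δ_v n (n + 1) rfl x p (p + n + 1) _ (p + n) (p + 1) (by omega) rfl, Cochain.zero_v,
    Int.negOnePow_succ, Units.neg_smul, ← sub_eq_add_neg] at h
  exact sub_eq_zero.mp h

lemma sub_comp_d_eq_zero {x : Cochain C D n} (hx : δ n (n + 1) x = 0)
    (y : Cochain C D (n - 1)) (p : ℤ)
    (hy : (δ (n - 1) n y).v (p + 1) (p + n + 1) (by omega) = x.v (p + 1) (p + n + 1) (by omega)) :
    (x.v p (p + n) rfl - n.negOnePow • C.d p (p + 1) ≫ y.v (p + 1) (p + n) (by omega)) ≫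
      D.d (p + n) (p + n + 1) = 0 := by
  rw [δ_v (n - 1) n (by omega) y (p + 1) (p + n + 1) _ (p + n) (p + 2) (by omega) (by omega)]
    at hy
  rw [Preadditive.sub_comp, comp_d_eq_of_δ_eq_zero hx, Linear.units_smul_comp, Category.assoc,
    eq_sub_of_add_eq hy]
  simp only [Preadditive.comp_sub, Linear.comp_units_smul, HomologicalComplex.d_comp_d_assoc,
    zero_comp, smul_zero, sub_zero, sub_self]

noncomputable def primitiveAux (x : Cochain C D n)
    (lift : ∀ {i m : ℤ}, (C.X i ⟶ D.X m) → (C.X i ⟶ D.X (m - 1))) :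
    ℕ → ∀ p : ℤ, C.X p ⟶ D.X (p + n - 1)
  | 0, _ => 0
  | k + 1, p => lift (x.v p (p + n) rfl - n.negOnePow • C.d p (p + 1) ≫
      primitiveAux x lift k (p + 1) ≫ (D.XIsoOfEq (by omega : p + 1 + n - 1 = p + n)).hom)

/-- With `C.X i = 0` for `i ≥ n₀`, the recursion producing the component in degree `p`
needs only `n₀ - p` steps, all started from `0`. -/
noncomputable def primitive (x : Cochain C D n)
    (lift : ∀ {i m : ℤ}, (C.X i ⟶ D.X m) → (C.X i ⟶ D.X (m - 1))) (n₀ : ℤ) :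
    Cochain C D (n - 1) :=
  Cochain.mk fun p q hpq =>
    primitiveAux x lift (n₀ - p).toNat p ≫ (D.XIsoOfEq (by omega : p + n - 1 = q)).hom

lemma primitive_v_of_lt (x : Cochain C D n)
    (lift : ∀ {i m : ℤ}, (C.X i ⟶ D.X m) → (C.X i ⟶ D.X (m - 1))) {n₀ p : ℤ} (hp : p < n₀) :
    (primitive x lift n₀).v p (p + n - 1) (by omega) =
      lift (x.v p (p + n) rfl - n.negOnePow • C.d p (p + 1) ≫
        (primitive x lift n₀).v (p + 1) (p + n) (by omega)) := by
  obtain ⟨k, hk⟩ : ∃ k : ℕ, (n₀ - p).toNat = k + 1 := ⟨(n₀ - (p + 1)).toNat, by omega⟩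
  have hk' : (n₀ - (p + 1)).toNat = k := by omega
  simp only [primitive, Cochain.mk_v, hk, hk', primitiveAux, HomologicalComplex.XIsoOfEq_rfl,
    Iso.refl_hom, Category.comp_id]

lemma δ_primitive {x : Cochain C D n} (hx : δ n (n + 1) x = 0)
    {lift : ∀ {i m : ℤ}, (C.X i ⟶ D.X m) → (C.X i ⟶ D.X (m - 1))}
    (hlift : ∀ (i m : ℤ) (f : C.X i ⟶ D.X m), f ≫ D.d m (m + 1) = 0 → lift f ≫ D.d (m - 1) m = f)
    {n₀ : ℤ} (hC : ∀ i, n₀ ≤ i → IsZero (C.X i)) :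
    δ (n - 1) n (primitive x lift n₀) = x := by
  suffices h : ∀ (k : ℕ) (p q : ℤ) (hpq : p + n = q), n₀ ≤ p + k →
      (δ (n - 1) n (primitive x lift n₀)).v p q hpq = x.v p q hpq by
    ext p q hpq
    exact h (n₀ - p).toNat p q hpq (by omega)
  intro k
  induction k with
  | zero => exact fun p _ _ hp => (hC p (by omega)).eq_of_src _ _
  | succ k ih =>
    rintro p q rfl hp
    by_cases hp₀ : n₀ ≤ p
    · exact (hC p hp₀).eq_of_src _ _
    have hcycle := sub_comp_d_eq_zero hx (primitive x lift n₀) p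
      (ih (p + 1) (p + n + 1) (by omega) (by omega))
    rw [δ_v (n - 1) n (by omega) _ p (p + n) rfl (p + n - 1) (p + 1) (by omega) rfl,
      primitive_v_of_lt x lift (not_le.mp hp₀), hlift _ _ _ hcycle, sub_add_cancel]

lemma acyclic_of_exists_comp_d_eq {n₀ : ℤ} (hC : ∀ i, n₀ ≤ i → IsZero (C.X i))
    (hD : ∀ (i m : ℤ) (f : C.X i ⟶ D.X m), f ≫ D.d m (m + 1) = 0 →
      ∃ g : C.X i ⟶ D.X (m - 1), g ≫ D.d (m - 1) m = f) :
    Acyclic C D := by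
  have hD' : ∀ (i m : ℤ) (f : C.X i ⟶ D.X m),
      ∃ g : C.X i ⟶ D.X (m - 1), f ≫ D.d m (m + 1) = 0 → g ≫ D.d (m - 1) m = f := by
    intro i m f
    by_cases hf : f ≫ D.d m (m + 1) = 0
    · exact (hD i m f hf).imp fun _ hg _ => hg
    · exact ⟨0, fun h => absurd h hf⟩
  choose lift hlift using hD'
  exact fun n x hx => ⟨primitive x (lift _ _) n₀, δ_primitive hx hlift hC⟩

end Primitive

end CochainComplex.HomComplex

theorem stmt10_general {A : Type*} [Category A] [Abelian A]
    (C D : CochainComplex A ℤ)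
    (hC : ∃ n : ℤ, ∀ i : ℤ, n ≤ i → IsZero (C.X i))
    (h : ∀ i : ℤ, ∀ n : ℤ,
        ∀ x : Cochain ((HomologicalComplex.single A (ComplexShape.up ℤ) 0).obj (C.X i)) D n,
          δ n (n + 1) x = 0 →
          ∃ y : Cochain ((HomologicalComplex.single A (ComplexShape.up ℤ) 0).obj (C.X i)) D
              (n - 1), δ (n - 1) n y = x) :
    ∀ n : ℤ, ∀ x : Cochain C D n, δ n (n + 1) x = 0 →
      ∃ y : Cochain C D (n - 1), δ (n - 1) n y = x := by
  obtain ⟨n₀, hC⟩ := hC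
  exact acyclic_of_exists_comp_d_eq hC fun _ _ f hf =>
    exists_comp_d_eq_of_acyclic_single (h _) f hf

/-- Let `C•`, `D•` be bounded above cochain complexes in an abelian category.  If for each
`i` the total hom complex `hom•(Cⁱ, D•)` is acyclic, then the total hom complex
`hom•(C•, D•)` is acyclic.  (Acyclicity of a hom complex is stated elementwise: every
`δ`-closed cochain is a `δ`-coboundary.) -/
theorem stmt10 {A : Type*} [Category A] [Abelian A]
    (C D : CochainComplex A ℤ)
    (hC : ∃ n : ℤ, ∀ i : ℤ, n ≤ i → IsZero (C.X i))
    (hD : ∃ n : ℤ, ∀ i : ℤ, n ≤ i → IsZero (D.X i))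
    (h : ∀ i : ℤ, ∀ n : ℤ,
        ∀ x : Cochain ((HomologicalComplex.single A (ComplexShape.up ℤ) 0).obj (C.X i)) D n,
          δ n (n + 1) x = 0 →
          ∃ y : Cochain ((HomologicalComplex.single A (ComplexShape.up ℤ) 0).obj (C.X i)) D
              (n - 1), δ (n - 1) n y = x) :
    ∀ n : ℤ, ∀ x : Cochain C D n, δ n (n + 1) x = 0 →
      ∃ y : Cochain C D (n - 1), δ (n - 1) n y = x :=
  stmt10_general C D hC h
end

section
/- Let $\mathcal{A}$ and $\Psi$ be such that $\Psi$ is a bimodule over an $A_\infty$/dg category $\mathcal{A}$ over a field $K$ of characteristic zero, and let $K[t]$ be the free graded algebra on a generator $t$ of degree $1$ (so $t^2 = 0$). If $K[t]\otimes \Phi$ and $K[t]\otimes \Psi$ are quasi-isomorphic as $K[t]\otimes\mathcal{A}$-bimodules, then $\Phi$ and $\Psi$ are quasi-isomorphic as $\mathcal{A}$-bimodules. (The proof applies the base-change functor $\mathfrak{M} \mapsto K \otimes^L_{K[t]} \mathfrak{M}$ induced by the algebra maps $K \to K[t] \to K$.) -/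
noncomputable section

variable {E : Type} [Ring E]

/-- Transport along an equality of indices. -/
def lcast {Φ : ℤ → Type} [∀ n, AddCommGroup (Φ n)] [∀ n, Module E (Φ n)]
    {a b : ℤ} (h : a = b) : Φ a →ₗ[E] Φ b := by
  subst h; exact LinearMap.id

/-- The underlying graded pieces of `K[t] ⊗ Φ` for `t` of degree `1` with `t² = 0`:
`(K[t] ⊗ Φ)ⁿ = Φⁿ ⊕ t·Φⁿ⁻¹`. -/
def Mt (Φ : ℤ → Type) (n : ℤ) : Type := Φ n × Φ (n - 1)

instance (Φ : ℤ → Type) [∀ n, AddCommGroup (Φ n)] (n : ℤ) : AddCommGroup (Mt Φ n) :=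
  inferInstanceAs (AddCommGroup (Φ n × Φ (n - 1)))

instance (Φ : ℤ → Type) [∀ n, AddCommGroup (Φ n)] [∀ n, Module E (Φ n)] (n : ℤ) :
    Module E (Mt Φ n) :=
  inferInstanceAs (Module E (Φ n × Φ (n - 1)))

/-- The differential of `K[t] ⊗ Φ`: `d(a + t b) = d a - t (d b)` (Koszul sign, `d t = 0`). -/
def dMt {Φ : ℤ → Type} [∀ n, AddCommGroup (Φ n)] [∀ n, Module E (Φ n)]
    (dΦ : ∀ n, Φ n →ₗ[E] Φ (n + 1)) (n : ℤ) : Mt Φ n →ₗ[E] Mt Φ (n + 1) :=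
  LinearMap.prodMap (dΦ n)
    (-(lcast (Φ := Φ) (show (n - 1) + 1 = (n + 1) - 1 by ring) ∘ₗ dΦ (n - 1)))

/-- Multiplication by `t` on `K[t] ⊗ Φ`: `t · (a + t b) = t a` (degree `+1`, square zero). -/
def tMt {Φ : ℤ → Type} [∀ n, AddCommGroup (Φ n)] [∀ n, Module E (Φ n)] (n : ℤ) :
    Mt Φ n →ₗ[E] Mt Φ (n + 1) :=
  (LinearMap.inr E (Φ (n + 1)) (Φ ((n + 1) - 1))) ∘ₗ
    (lcast (Φ := Φ) (show n = (n + 1) - 1 by ring)) ∘ₗ (LinearMap.fst E (Φ n) (Φ (n - 1)))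

/- ### Auxiliary lemmas -/

theorem lcast_rfl {Φ : ℤ → Type} [∀ n, AddCommGroup (Φ n)] [∀ n, Module E (Φ n)]
    {a : ℤ} (h : a = a) (x : Φ a) : lcast (E := E) h x = x := rfl

theorem lcast_lcast {Φ : ℤ → Type} [∀ n, AddCommGroup (Φ n)] [∀ n, Module E (Φ n)]
    {a b c : ℤ} (h1 : a = b) (h2 : b = c) (x : Φ a) :
    lcast (E := E) h2 (lcast (E := E) h1 x) = lcast (E := E) (h1.trans h2) x := by
  subst h1 h2; rfl

theorem lcast_inj {Φ : ℤ → Type} [∀ n, AddCommGroup (Φ n)] [∀ n, Module E (Φ n)]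
    {a b : ℤ} (h : a = b) {x y : Φ a} (hxy : lcast (E := E) h x = lcast (E := E) h y) :
    x = y := by subst h; exact hxy

theorem apply_lcast {Φ Ψ : ℤ → Type} [∀ n, AddCommGroup (Φ n)] [∀ n, Module E (Φ n)]
    [∀ n, AddCommGroup (Ψ n)] [∀ n, Module E (Ψ n)] (f : ∀ n, Φ n →ₗ[E] Ψ n)
    {a b : ℤ} (h : a = b) (x : Φ a) :
    f b (lcast (E := E) h x) = lcast (E := E) h (f a x) := by subst h; rfl

theorem d_lcast {Φ : ℤ → Type} [∀ n, AddCommGroup (Φ n)] [∀ n, Module E (Φ n)]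
    (d : ∀ n, Φ n →ₗ[E] Φ (n + 1)) {a b : ℤ} (h : a = b) (h' : a + 1 = b + 1) (x : Φ a) :
    d b (lcast (E := E) h x) = lcast (E := E) h' (d a x) := by subst h; rfl

/-- The "first component" chain map `Φ → Ψ` extracted from `F`. -/
def gmap {Φ Ψ : ℤ → Type} [∀ n, AddCommGroup (Φ n)] [∀ n, Module E (Φ n)]
    [∀ n, AddCommGroup (Ψ n)] [∀ n, Module E (Ψ n)]
    (F : ∀ n, Mt Φ n →ₗ[E] Mt Ψ n) (n : ℤ) : Φ n →ₗ[E] Ψ n :=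
  LinearMap.fst E (Ψ n) (Ψ (n - 1)) ∘ₗ F n ∘ₗ LinearMap.inl E (Φ n) (Φ (n - 1))

theorem dMt_pair {Φ : ℤ → Type} [∀ n, AddCommGroup (Φ n)] [∀ n, Module E (Φ n)]
    (dΦ : ∀ n, Φ n →ₗ[E] Φ (n + 1)) (n : ℤ) (a : Φ n) (b : Φ (n - 1)) :
    dMt (E := E) dΦ n ((a, b) : Mt Φ n)
      = ((dΦ n a, -(lcast (E := E) (show (n - 1) + 1 = (n + 1) - 1 by ring) (dΦ (n - 1) b)))
          : Mt Φ (n + 1)) := rfl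

theorem dMt_pair0 {Φ : ℤ → Type} [∀ n, AddCommGroup (Φ n)] [∀ n, Module E (Φ n)]
    (dΦ : ∀ n, Φ n →ₗ[E] Φ (n + 1)) (n : ℤ) (a : Φ n) :
    dMt (E := E) dΦ n ((a, 0) : Mt Φ n) = ((dΦ n a, 0) : Mt Φ (n + 1)) := by
  rw [dMt_pair]; rw [map_zero, map_zero, neg_zero]

theorem tMt_pair {Φ : ℤ → Type} [∀ n, AddCommGroup (Φ n)] [∀ n, Module E (Φ n)]
    (n : ℤ) (a : Φ n) (b : Φ (n - 1)) :
    tMt (E := E) (Φ := Φ) n ((a, b) : Mt Φ n)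
      = ((0, lcast (E := E) (show n = (n + 1) - 1 by ring) a) : Mt Φ (n + 1)) := rfl

theorem tMt_apply {Φ : ℤ → Type} [∀ n, AddCommGroup (Φ n)] [∀ n, Module E (Φ n)]
    (n : ℤ) (p : Mt Φ n) :
    tMt (E := E) (Φ := Φ) n p
      = ((0, lcast (E := E) (show n = (n + 1) - 1 by ring) p.1) : Mt Φ (n + 1)) := rfl

/-- Let `Φ`, `Ψ` be (complexes of) bimodules over a dg category `A` over a field `K` of
characteristic zero — modelled as cochain complexes of modules over the enveloping
`K`-algebra `E` — and let `K[t]` be the free graded algebra on a degree-`1` generator `t`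
(so `t² = 0`).  If `K[t] ⊗ Φ` and `K[t] ⊗ Ψ` are quasi-isomorphic as `K[t] ⊗ A`-bimodules
(a chain map compatible with the `E`-action and with multiplication by `t`, inducing an
isomorphism on all cohomology), then `Φ` and `Ψ` are quasi-isomorphic as `A`-bimodules. -/
theorem stmt16 (K : Type) [Field K] [CharZero K]
    (E : Type) [Ring E] [Algebra K E]
    (Φ Ψ : ℤ → Type) [∀ n, AddCommGroup (Φ n)] [∀ n, Module E (Φ n)]
    [∀ n, AddCommGroup (Ψ n)] [∀ n, Module E (Ψ n)]
    (dΦ : ∀ n, Φ n →ₗ[E] Φ (n + 1)) (dΨ : ∀ n, Ψ n →ₗ[E] Ψ (n + 1))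
    (hdΦ : ∀ n (x : Φ n), dΦ (n + 1) (dΦ n x) = 0)
    (hdΨ : ∀ n (x : Ψ n), dΨ (n + 1) (dΨ n x) = 0)
    (F : ∀ n, Mt Φ n →ₗ[E] Mt Ψ n)
    (hF : ∀ n (x : Mt Φ n), F (n + 1) (dMt dΦ n x) = dMt dΨ n (F n x))
    (hFt : ∀ n (x : Mt Φ n), F (n + 1) (tMt (E := E) (Φ := Φ) n x) = tMt (E := E) (Φ := Ψ) n (F n x))
    (hFinj : ∀ n (x : Mt Φ (n + 1)), dMt dΦ (n + 1) x = 0 →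
        (∃ z, F (n + 1) x = dMt dΨ n z) → ∃ z', x = dMt dΦ n z')
    (hFsurj : ∀ n (y : Mt Ψ (n + 1)), dMt dΨ (n + 1) y = 0 →
        ∃ x, dMt dΦ (n + 1) x = 0 ∧ ∃ z, F (n + 1) x - y = dMt dΨ n z) :
    ∃ g : ∀ n, Φ n →ₗ[E] Ψ n,
      (∀ n (x : Φ n), g (n + 1) (dΦ n x) = dΨ n (g n x)) ∧
      (∀ n (x : Φ (n + 1)), dΦ (n + 1) x = 0 →
          (∃ z, g (n + 1) x = dΨ n z) → ∃ z', x = dΦ n z') ∧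
      (∀ n (y : Ψ (n + 1)), dΨ (n + 1) y = 0 →
          ∃ x, dΦ (n + 1) x = 0 ∧ ∃ z, g (n + 1) x - y = dΨ n z) := by
  -- `F (n+1)` applied to `(0, b)`:
  have hFsnd0 : ∀ n (b : Φ ((n + 1) - 1)), F (n + 1) ((0, b) : Mt Φ (n + 1)) =
      ((0, lcast (E := E) (show n = (n + 1) - 1 by ring)
          (gmap (E := E) F n (lcast (E := E) (show (n + 1) - 1 = n by ring) b)))
        : Mt Ψ (n + 1)) := by
    intro n b
    have h := hFt n ((lcast (E := E) (show (n + 1) - 1 = n by ring) b, 0) : Mt Φ n)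
    rw [tMt_pair, lcast_lcast, lcast_rfl, tMt_apply] at h
    exact h
  -- first component of `F` only depends on the first component:
  have hFfst : ∀ n (p : Mt Φ (n + 1)), (F (n + 1) p).1 = gmap (E := E) F (n + 1) p.1 := by
    intro n p
    have hsplit : p = ((p.1, 0) : Mt Φ (n + 1)) + ((0, p.2) : Mt Φ (n + 1)) := by
      show p = ((p.1 + 0, 0 + p.2) : Mt Φ (n + 1))
      rw [add_zero, zero_add]
      rfl
    conv_lhs => rw [hsplit]
    rw [show F (n + 1) (((p.1, 0) : Mt Φ (n + 1)) + ((0, p.2) : Mt Φ (n + 1))) = F (n + 1) ((p.1, 0) : Mt Φ (n + 1)) + F (n + 1) ((0, p.2) : Mt Φ (n + 1)) from (F (n + 1)).map_add _ _, hFsnd0 n p.2]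
    show (F (n + 1) ((p.1, 0) : Mt Φ (n + 1))).1 + 0 = _
    rw [add_zero]; rfl
  -- commutation of `g` with differentials
  have hcomm : ∀ n (x : Φ n), gmap (E := E) F (n + 1) (dΦ n x) = dΨ n (gmap (E := E) F n x) := by
    intro n x
    have h := hF n ((x, 0) : Mt Φ n)
    rw [dMt_pair0] at h
    exact congrArg (fun r : Mt Ψ (n + 1) => r.1) h
  -- surjectivity on cohomology
  have hsurj : ∀ n (y : Ψ (n + 1)), dΨ (n + 1) y = 0 →
      ∃ x, dΦ (n + 1) x = 0 ∧ ∃ z, gmap (E := E) F (n + 1) x - y = dΨ n z := by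
    intro n y hy
    obtain ⟨p, hc, q, hq⟩ := hFsurj n ((y, 0) : Mt Ψ (n + 1)) (by rw [dMt_pair0, hy]; rfl)
    refine ⟨p.1, congrArg (fun r : Mt Φ ((n + 1) + 1) => r.1) hc, q.1, ?_⟩
    have h2 : (F (n + 1) p).1 - y = dΨ n q.1 :=
      congrArg (fun r : Mt Ψ (n + 1) => r.1) hq
    rw [hFfst n p] at h2
    exact h2
  refine ⟨gmap (E := E) F, hcomm, ?_, hsurj⟩
  -- injectivity on cohomology
  intro n x hx hex
  obtain ⟨z, hz⟩ := hex
  set y₀ : Ψ ((n + 1) - 1) := (F (n + 1) ((x, 0) : Mt Φ (n + 1))).2 with hy₀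
  -- y₀ is a cocycle
  have hyc : dΨ ((n + 1) - 1) y₀ = 0 := by
    have h := hF (n + 1) ((x, 0) : Mt Φ (n + 1))
    rw [dMt_pair0, hx] at h
    have h0 : ((0, 0) : Mt Φ ((n + 1) + 1)) = 0 := rfl
    rw [h0, show F ((n + 1) + 1) (0 : Φ ((n + 1) + 1) × Φ (((n + 1) + 1) - 1)) = 0 from (F _).map_zero] at h
    have h2 : (0 : Ψ (((n + 1) + 1) - 1))
        = -(lcast (E := E) (show ((n + 1) - 1) + 1 = ((n + 1) + 1) - 1 by ring)
            (dΨ ((n + 1) - 1) y₀)) :=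
      congrArg (fun r : Mt Ψ ((n + 1) + 1) => r.2) h
    have h3 : lcast (E := E) (show ((n + 1) - 1) + 1 = ((n + 1) + 1) - 1 by ring)
        (dΨ ((n + 1) - 1) y₀) = 0 := neg_eq_zero.mp h2.symm
    apply lcast_inj (E := E) (show ((n + 1) - 1) + 1 = ((n + 1) + 1) - 1 by ring)
    rw [h3, map_zero]
  -- use surjectivity at degree n to hit the class of y₀
  have h1 : (n + 1) - 1 = (n - 1) + 1 := by ring
  obtain ⟨u, hu, w, hw⟩ := hsurj (n - 1) (lcast (E := E) h1 y₀)
    (by rw [d_lcast (E := E) dΨ h1 (by ring) y₀, hyc, map_zero])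
  have h2 : (n - 1) + 1 = (n + 1) - 1 := by ring
  set X' : Mt Φ (n + 1) := ((x, -(lcast (E := E) h2 u)) : Mt Φ (n + 1)) with hX'
  have hcoc : dMt (E := E) dΦ (n + 1) X' = 0 := by
    rw [hX', dMt_pair, hx, map_neg, d_lcast (E := E) dΦ h2 (by ring) u, hu, map_zero,
      neg_zero, map_zero, neg_zero]
    rfl
  have hFX' : F (n + 1) X' = ((dΨ n z, -(lcast (E := E) h2 (dΨ (n - 1) w))) : Mt Ψ (n + 1)) := by
    have hsplit : X' = ((x, 0) : Mt Φ (n + 1)) - ((0, lcast (E := E) h2 u) : Mt Φ (n + 1)) := by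
      show X' = ((x - 0, 0 - lcast (E := E) h2 u) : Mt Φ (n + 1))
      rw [sub_zero, zero_sub]
    rw [hsplit, show F (n + 1) (((x, 0) : Mt Φ (n + 1)) - ((0, lcast (E := E) h2 u) : Mt Φ (n + 1))) = F (n + 1) ((x, 0) : Mt Φ (n + 1)) - F (n + 1) ((0, lcast (E := E) h2 u) : Mt Φ (n + 1)) from (F (n + 1)).map_sub _ _, hFsnd0 n (lcast (E := E) h2 u), lcast_lcast,
      apply_lcast (gmap (E := E) F) (h2.trans (show (n + 1) - 1 = n by ring)) u]
    have hgu : gmap (E := E) F ((n - 1) + 1) u = dΨ (n - 1) w + lcast (E := E) h1 y₀ :=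
      sub_eq_iff_eq_add.mp hw
    have hidx : gmap (E := E) F (n - 1 + 1) u
        = gmap (E := E) F ((n - 1) + 1) u := rfl
    rw [hidx, hgu, map_add, map_add, lcast_lcast, lcast_lcast, lcast_lcast, lcast_rfl]
    have hFx0 : F (n + 1) ((x, 0) : Mt Φ (n + 1))
        = ((gmap (E := E) F (n + 1) x, y₀) : Mt Ψ (n + 1)) := rfl
    rw [hFx0]
    show ((gmap (E := E) F (n + 1) x - 0,
        y₀ - (lcast (E := E) _ (dΨ (n - 1) w) + y₀)) : Mt Ψ (n + 1)) = _
    rw [sub_zero, hz]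
    have hpi : lcast (E := E)
        ((h2.trans (show (n + 1) - 1 = n by ring)).trans (show n = (n + 1) - 1 by ring))
        (dΨ (n - 1) w) = lcast (E := E) h2 (dΨ (n - 1) w) := rfl
    rw [hpi]
    have : y₀ - (lcast (E := E) h2 (dΨ (n - 1) w) + y₀)
        = -(lcast (E := E) h2 (dΨ (n - 1) w)) := by abel
    rw [this]
  obtain ⟨q', hq'⟩ := hFinj n X' hcoc ⟨((z, w) : Mt Ψ n), by
    rw [hFX', dMt_pair]⟩
  exact ⟨q'.1, congrArg (fun r : Mt Φ (n + 1) => r.1) hq'⟩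

end
end

section
/- The function field trivialization identity for the multiplicative degeneration: in $\mathbb{C}[X,Y][[q]]/(XY-q)$ with relations $X_{i-1} = qX_i$, $Y_{i+1} = qY_i$, $X_iY_i = 1$ on overlaps, the infinite products $\tilde G_{i+1/2} = \prod_{j=0}^{\infty}\frac{1 - q^j z y_0 X_i}{1 - q^j y_0 X_i} \prod_{j=0}^{\infty}\frac{1 - q^j z^{-1} y_0^{-1} Y_{i+1}}{1 - q^j y_0^{-1} Y_{i+1}}$ converge $q$-adically, and satisfy the cocycle relation $\tilde G_{i+1/2}/\tilde G_{i-1/2} = z$ on the overlap chart, so that $G_{i+1/2} := z^{-i}\tilde G_{i+1/2}$ satisfies $G\circ \mathfrak{tr} = z^{-1} G$ where $\mathfrak{tr}$ is the index shift $i \mapsto i+1$. -/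
noncomputable section

/-- The overlap chart ring `V_i = ℂ[Y^±][[q]]` of the universal cover of the Tate curve,
with `Y = Y_i`; on it `X_i = Y⁻¹`, `Y_{i+1} = qY`, `X_{i-1} = qY⁻¹`. -/
abbrev BT : Type := PowerSeries (LaurentPolynomial ℂ)

/-- The element `q`. -/
def qB : BT := PowerSeries.X

/-- The coordinate `Y = Y_i` on the overlap. -/
def Yc : BT := PowerSeries.C (LaurentPolynomial.T 1)

/-- Its inverse `Y⁻¹ = X_i`. -/
def Ycinv : BT := PowerSeries.C (LaurentPolynomial.T (-1))

/-- The inclusion `ℂ[[q]] → ℂ[Y^±][[q]]`. -/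
def ιB : PowerSeries ℂ →+* BT := PowerSeries.map (algebraMap ℂ (LaurentPolynomial ℂ))

/-- `f : ℕ → BT` tends to `L` in the `q`-adic topology. -/
def QTends (f : ℕ → BT) (L : BT) : Prop :=
  ∀ n : ℕ, ∃ N₀ : ℕ, ∀ m ≥ N₀, ∀ k < n,
    PowerSeries.coeff k (f m) = PowerSeries.coeff k L

/-! In the overlap coordinate `Y = Y_i` (so `X_i = Y⁻¹`, `Y_{i+1} = qY`, `X_{i-1} = qY⁻¹`), each
of the four `q`-Pochhammer products `(c; q)_∞ = ∏_{j ≥ 0} (1 - qʲ c)` of `G̃_{i+1/2}` reappears in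
`G̃_{i-1/2}` with `c` replaced by `qc` or vice versa. Since `(c; q)_∞ = (1 - c) (qc; q)_∞`, the
quotient collapses to `(1 - z y₀ X)(1 - y₀⁻¹ Y) / ((1 - z⁻¹ y₀⁻¹ Y)(1 - y₀ X))`, which is `z`
because `XY = 1`. The products converge since their `j`-th factor is `1` modulo `qʲ`. -/

open PowerSeries Filter Topology Finset
open scoped PowerSeries.WithPiTopology

section QPochhammer

variable {R : Type*} [CommRing R] [TopologicalSpace R]

def qPochhammer (c : R⟦X⟧) : R⟦X⟧ := ∏' j : ℕ, (1 - X ^ j * c)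

theorem multipliable_one_sub_X_pow_mul (c : R⟦X⟧) :
    Multipliable fun j : ℕ ↦ 1 - X ^ j * c := by
  simp_rw [sub_eq_add_neg]
  refine WithPiTopology.multipliable_one_add_of_tendsto_order_atTop_nhds_top _ <|
    ENat.tendsto_nhds_top_iff_natCast_lt.mpr fun n ↦ eventually_atTop.mpr ⟨n + 1, fun m hm ↦ ?_⟩
  rw [order_neg]
  refine lt_of_lt_of_le (by exact_mod_cast hm) (nat_le_order _ m fun i hi ↦ ?_)
  rw [coeff_X_pow_mul', if_neg (by omega)]

theorem tendsto_prod_range_qPochhammer (c : R⟦X⟧) :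
    Tendsto (fun N ↦ ∏ j ∈ range N, (1 - X ^ j * c)) atTop (𝓝 (qPochhammer c)) :=
  (multipliable_one_sub_X_pow_mul c).hasProd.tendsto_prod_nat

variable [IsTopologicalSemiring R] [T2Space R]

theorem qPochhammer_eq_one_sub_mul (c : R⟦X⟧) :
    qPochhammer c = (1 - c) * qPochhammer (X * c) := by
  have hshift : (fun j : ℕ ↦ 1 - X ^ (j + 1) * c) = fun j ↦ 1 - X ^ j * (X * c) := by
    ext1 j; ring
  unfold qPochhammer
  rw [tprod_eq_zero_mul' (f := fun j : ℕ ↦ 1 - X ^ j * c), hshift, pow_zero, one_mul]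
  rw [hshift]
  exact multipliable_one_sub_X_pow_mul _

theorem qPochhammer_cocycle {u u' v v' x w : R⟦X⟧} (hu : u * u' = 1) (hv : v * v' = 1)
    (hxw : x * w = 1) :
    qPochhammer (u * (v * x)) * qPochhammer (u' * (v' * (X * w))) *
        (qPochhammer (v * (X * x)) * qPochhammer (v' * w)) =
      u * (qPochhammer (u * (v * (X * x))) * qPochhammer (u' * (v' * w))) *
        (qPochhammer (v * x) * qPochhammer (v' * (X * w))) := by
  have hlinear : (1 - u * (v * x)) * (1 - v' * w) = u * ((1 - u' * (v' * w)) * (1 - v * x)) := by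
    linear_combination (v' * w - v * v' * x * w) * hu + (u - 1) * x * w * hv + (u - 1) * hxw
  simp only [mul_left_comm _ (X : R⟦X⟧)]
  rw [qPochhammer_eq_one_sub_mul (u * (v * x)), qPochhammer_eq_one_sub_mul (v' * w),
    qPochhammer_eq_one_sub_mul (u' * (v' * w)), qPochhammer_eq_one_sub_mul (v * x)]
  linear_combination qPochhammer (X * (u * (v * x))) * qPochhammer (X * (u' * (v' * w))) *
    qPochhammer (X * (v * x)) * qPochhammer (X * (v' * w)) * hlinear

end QPochhammer

theorem qTends_iff_tendsto [TopologicalSpace (LaurentPolynomial ℂ)]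
    [DiscreteTopology (LaurentPolynomial ℂ)] {f : ℕ → BT} {L : BT} :
    QTends f L ↔ Tendsto f atTop (𝓝 L) := by
  simp only [QTends, WithPiTopology.tendsto_iff_coeff_tendsto, nhds_discrete, tendsto_pure]
  constructor
  · intro h k
    obtain ⟨N₀, hN₀⟩ := h (k + 1)
    exact eventually_atTop.mpr ⟨N₀, fun m hm ↦ hN₀ m hm k k.lt_succ_self⟩
  · intro h n
    obtain ⟨N₀, hN₀⟩ := eventually_atTop.mp ((eventually_all_finset (range n)).mpr fun k _ ↦ h k)
    exact ⟨N₀, fun m hm k hk ↦ hN₀ m hm k (mem_range.mpr hk)⟩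

theorem qTends_prod_mul_prod_qPochhammer [TopologicalSpace (LaurentPolynomial ℂ)]
    [DiscreteTopology (LaurentPolynomial ℂ)] (a b : BT) :
    QTends (fun N ↦ (∏ j ∈ range N, (1 - X ^ j * a)) * ∏ j ∈ range N, (1 - X ^ j * b))
      (qPochhammer a * qPochhammer b) :=
  qTends_iff_tendsto.mpr ((tendsto_prod_range_qPochhammer a).mul (tendsto_prod_range_qPochhammer b))

theorem Ycinv_mul_Yc : Ycinv * Yc = 1 := by
  rw [Ycinv, Yc, ← map_mul, ← LaurentPolynomial.T_add, neg_add_cancel, LaurentPolynomial.T_zero,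
    map_one]

theorem ιB_mul_ιB_inv {a : PowerSeries ℂ} (ha : IsUnit a) : ιB a * ιB ↑ha.unit⁻¹ = 1 := by
  rw [← map_mul, ha.mul_val_inv, map_one]

/-- `NUMp`, `DENp` (resp. `NUMm`, `DENm`) are the numerator and denominator of `G̃_{i+1/2}`
(resp. `G̃_{i-1/2}`) in the overlap coordinate `Y = Y_i`; the cocycle relation and
`G ∘ 𝔱𝔯 = z⁻¹ G` are stated with these denominators cleared. -/
theorem stmt19 (z y0 : PowerSeries ℂ) (hz : IsUnit z) (hy : IsUnit y0) :
    ∃ NUMp DENp NUMm DENm : BT,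
      QTends (fun N => (∏ j ∈ Finset.range N, (1 - qB ^ j * ιB z * ιB y0 * Ycinv)) *
        (∏ j ∈ Finset.range N,
          (1 - qB ^ j * ιB ↑hz.unit⁻¹ * ιB ↑hy.unit⁻¹ * (qB * Yc)))) NUMp ∧
      QTends (fun N => (∏ j ∈ Finset.range N, (1 - qB ^ j * ιB y0 * Ycinv)) *
        (∏ j ∈ Finset.range N, (1 - qB ^ j * ιB ↑hy.unit⁻¹ * (qB * Yc)))) DENp ∧
      QTends (fun N => (∏ j ∈ Finset.range N, (1 - qB ^ j * ιB z * ιB y0 * (qB * Ycinv))) *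
        (∏ j ∈ Finset.range N,
          (1 - qB ^ j * ιB ↑hz.unit⁻¹ * ιB ↑hy.unit⁻¹ * Yc))) NUMm ∧
      QTends (fun N => (∏ j ∈ Finset.range N, (1 - qB ^ j * ιB y0 * (qB * Ycinv))) *
        (∏ j ∈ Finset.range N, (1 - qB ^ j * ιB ↑hy.unit⁻¹ * Yc))) DENm ∧
      NUMp * DENm = ιB z * NUMm * DENp ∧
      (∀ i : ℤ,
        ((Units.map ιB.toMonoidHom hz.unit ^ (-i) : BTˣ) : BT) * NUMm =
          ((Units.map ιB.toMonoidHom hz.unit)⁻¹ : BTˣ) *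
            ((Units.map ιB.toMonoidHom hz.unit ^ (-(i - 1)) : BTˣ) : BT) * NUMm) := by
  let : TopologicalSpace (LaurentPolynomial ℂ) := ⊥
  have : DiscreteTopology (LaurentPolynomial ℂ) := ⟨rfl⟩
  simp only [qB, mul_assoc]
  refine ⟨_, _, _, _, qTends_prod_mul_prod_qPochhammer _ _, qTends_prod_mul_prod_qPochhammer _ _,
    qTends_prod_mul_prod_qPochhammer _ _, qTends_prod_mul_prod_qPochhammer _ _,
    by simpa only [mul_assoc] using
      qPochhammer_cocycle (ιB_mul_ιB_inv hz) (ιB_mul_ιB_inv hy) Ycinv_mul_Yc, fun i ↦ ?_⟩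
  have hzpow : (Units.map ιB.toMonoidHom hz.unit)⁻¹ * Units.map ιB.toMonoidHom hz.unit ^ (-(i - 1))
      = Units.map ιB.toMonoidHom hz.unit ^ (-i) := by group
  rw [← hzpow, Units.val_mul]
  ring

end
end
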